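/- arXiv:2306.08523 — 3 statements merged into one kernel-verified Lean document; each statement's English description precedes it below -/
import Mathlib

section
/- For matrices A ∈ ℂ^{n×n}, B ∈ ℂ^{n×m}, C ∈ ℂ^{p×n}, if the block matrix (CB, CAB, CA²B, …, CA^{n-1}B) has rank p, then for every eigenvalue z of A the matrix (C(zI−A), CB) has rank p. -/
/-!
Since `z • 1` commutes with `A`, the geometric-sum identity
`A ^ k = z ^ k • 1 - (z • 1 - A) * G k` with `G k = ∑ i < k, (z • 1) ^ i * A ^ (k - 1 - i)`
gives `C * A ^ k * B = C * (z • 1 - A) * (-G k * B) + C * B * (z ^ k • 1)`. Hence the Kalman matrix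
factors as `[C (z • 1 - A), C B]` times a fixed matrix, so its rank `p` is at most the rank of
`[C (z • 1 - A), C B]`, which has only `p` rows.
-/

open Matrix Finset

namespace Matrix

variable {R ι κ μ ν : Type*} [CommRing R]

def blockRow (X : ν → Matrix ι κ R) : Matrix ι (ν × κ) R :=
  of fun r kj => X kj.1 r kj.2

theorem blockRow_add (X Y : ν → Matrix ι κ R) :
    blockRow (X + Y) = blockRow X + blockRow Y :=
  rfl

theorem mul_blockRow [Fintype ι] (P : Matrix μ ι R) (X : ν → Matrix ι κ R) :
    P * blockRow X = blockRow fun k => P * X k := by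
  ext i ⟨k, j⟩
  simp only [blockRow, mul_apply, of_apply]

theorem pow_eq_smul_one_sub_mul [Fintype ι] [DecidableEq ι] (A : Matrix ι ι R) (z : R) (k : ℕ) :
    A ^ k = z ^ k • 1 - (z • 1 - A) * ∑ i ∈ range k, (z • 1) ^ i * A ^ (k - 1 - i) := by
  rw [((Commute.one_left A).smul_left z).mul_geom_sum₂ k, smul_pow, one_pow, sub_sub_cancel]

def outputKalmanMatrix [Fintype ι] [DecidableEq ι] (A : Matrix ι ι R) (B : Matrix ι κ R)
    (C : Matrix μ ι R) (N : ℕ) : Matrix μ (Fin N × κ) R :=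
  blockRow fun k : Fin N => C * A ^ (k : ℕ) * B

theorem outputKalmanMatrix_eq_fromCols_mul [Fintype ι] [DecidableEq ι] [Fintype κ]
    [DecidableEq κ] (A : Matrix ι ι R) (B : Matrix ι κ R) (C : Matrix μ ι R) (N : ℕ) (z : R) :
    outputKalmanMatrix A B C N = fromCols (C * (z • 1 - A)) (C * B) *
      fromRows
        (blockRow fun k : Fin N => -(∑ i ∈ range k, (z • 1) ^ i * A ^ (k - 1 - i)) * B)
        (blockRow fun k : Fin N => z ^ (k : ℕ) • (1 : Matrix κ κ R)) := by
  rw [fromCols_mul_fromRows, mul_blockRow, mul_blockRow, ← blockRow_add, outputKalmanMatrix]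
  congr 1
  ext1 k
  rw [pow_eq_smul_one_sub_mul A z k]
  simp only [Pi.add_apply, sub_eq_neg_add, Matrix.add_mul, Matrix.mul_add, Matrix.neg_mul,
    Matrix.mul_neg, Matrix.mul_assoc, Matrix.smul_mul, Matrix.mul_smul, Matrix.one_mul,
    Matrix.mul_one]

theorem rank_outputKalmanMatrix_le [Fintype ι] [DecidableEq ι] [Fintype κ]
    [StrongRankCondition R] (A : Matrix ι ι R) (B : Matrix ι κ R) (C : Matrix μ ι R) (N : ℕ)
    (z : R) :
    (outputKalmanMatrix A B C N).rank ≤ (fromCols (C * (z • 1 - A)) (C * B)).rank := by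
  classical
  rw [outputKalmanMatrix_eq_fromCols_mul A B C N z]
  exact rank_mul_le_left _ _

end Matrix

theorem stmt0 {n m p : ℕ}
    (A : Matrix (Fin n) (Fin n) ℂ) (B : Matrix (Fin n) (Fin m) ℂ)
    (C : Matrix (Fin p) (Fin n) ℂ)
    (hK : (Matrix.of fun (i : Fin p) (kj : Fin n × Fin m) =>
      (C * A ^ (kj.1 : ℕ) * B) i kj.2).rank = p) :
    ∀ z ∈ spectrum ℂ A,
      (Matrix.fromCols (C * (z • (1 : Matrix (Fin n) (Fin n) ℂ) - A)) (C * B)).rank = p := by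
  intro z _
  refine le_antisymm ((rank_le_card_height _).trans_eq (Fintype.card_fin p)) ?_
  calc p = (outputKalmanMatrix A B C n).rank := hK.symm
    _ ≤ _ := rank_outputKalmanMatrix_le A B C n z
end

section
/- Let A ∈ ℂ^{n×n}, B ∈ ℂ^{n×m}, C ∈ ℂ^{p×n}. The output controllability Gramian W(t) = ∫₀ᵗ C e^{sA} B Bᴴ e^{sAᴴ} Cᴴ ds is positive definite for some t > 0 if and only if rank(CB, CAB, …, CA^{n-1}B) = p. -/
open Matrix NormedSpace
open scoped ComplexOrder

/-!
Write `G s = C * exp (s • A) * B`. The quadratic form of the Gramian is `x ↦ ∫₀ᵗ ‖xᴴ G s‖²`, so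
`W t` is positive definite iff no nonzero row vector `u` satisfies `u G s = 0` for all `s ∈ [0, t]`.
Differentiating repeatedly, `u G s` vanishes on `[0, t]` iff `u C Aᵏ B = 0` for all `k` (conversely,
expand the exponential series), and by Cayley–Hamilton `k < n` suffices. That no nonzero `u`
annihilates all `C Aᵏ B`, `k < n`, is the statement that the block matrix has full row rank `p`.
-/

open Set

open Polynomial in
theorem Matrix.pow_mem_span_pow_lt {ι R : Type*} [Fintype ι] [DecidableEq ι] [CommRing R]
    [Nontrivial R] (A : Matrix ι ι R) (k : ℕ) :
    A ^ k ∈ Submodule.span R ((A ^ ·) '' Iio (Fintype.card ι)) := by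
  cases isEmpty_or_nonempty ι
  · simp [Subsingleton.elim (A ^ k) 0]
  have hdeg : (X ^ k %ₘ A.charpoly).natDegree < Fintype.card ι := by
    refine A.charpoly_natDegree_eq_dim ▸ natDegree_modByMonic_lt _ A.charpoly_monic ?_
    intro h
    have hdim := A.charpoly_natDegree_eq_dim
    rw [h, natDegree_one] at hdim
    exact Fintype.card_ne_zero hdim.symm
  rw [pow_eq_aeval_mod_charpoly, aeval_eq_sum_range' hdeg]
  exact Submodule.sum_mem _ fun i hi =>
    Submodule.smul_mem _ _ (Submodule.subset_span ⟨i, Finset.mem_range.1 hi, rfl⟩)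

theorem Matrix.map_pow_eq_zero_iff_of_lt {ι R M : Type*} [Fintype ι] [DecidableEq ι] [CommRing R]
    [Nontrivial R] [AddCommGroup M] [Module R M] (L : Matrix ι ι R →ₗ[R] M) (A : Matrix ι ι R) :
    (∀ k, L (A ^ k) = 0) ↔ ∀ k < Fintype.card ι, L (A ^ k) = 0 := by
  refine ⟨fun h k _ => h k, fun h k => ?_⟩
  have hspan : Submodule.span R ((A ^ ·) '' Iio (Fintype.card ι)) ≤ LinearMap.ker L :=
    Submodule.span_le.2 <| by rintro _ ⟨i, hi, rfl⟩; exact h i hi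
  exact hspan (A.pow_mem_span_pow_lt k)

section Exponential

variable {𝔸 E : Type*} [NormedRing 𝔸] [NormedAlgebra ℝ 𝔸] [CompleteSpace 𝔸]
  [NormedAddCommGroup E] [NormedSpace ℝ E]

theorem ContinuousLinearMap.map_exp_eq_zero (L : 𝔸 →L[ℝ] E) {a : 𝔸} (h : ∀ k, L (a ^ k) = 0) :
    L (exp a) = 0 := by
  rw [congrFun (exp_eq_tsum ℝ) a, L.map_tsum (expSeries_summable' a)]
  simp [h]

theorem ContinuousLinearMap.hasDerivAt_map_exp_smul (L : 𝔸 →L[ℝ] E) (a : 𝔸) (s : ℝ) :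
    HasDerivAt (fun s : ℝ => L (exp (s • a))) (L (a * exp (s • a))) s :=
  L.hasFDerivAt.comp_hasDerivAt s (hasDerivAt_exp_smul_const' a s)

theorem eqOn_zero_of_hasDerivAt {f f' : ℝ → E} {a b : ℝ} (hab : a < b)
    (hf : ∀ s, HasDerivAt f (f' s) s) (h : EqOn f 0 (Icc a b)) : EqOn f' 0 (Icc a b) := fun s hs =>
  (uniqueDiffOn_Icc hab s hs).eq_deriv _ (hf s).hasDerivWithinAt
    ((hasDerivWithinAt_const s _ 0).congr h (h hs))

-- Differentiating `s ↦ L (exp (s • a))` turns `L` into `L ∘ (a * ·)`: induct over all `L` at once.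
theorem map_pow_eq_zero_of_eqOn_exp_smul {t : ℝ} (ht : 0 < t) (a : 𝔸) (k : ℕ) :
    ∀ L : 𝔸 →L[ℝ] E, EqOn (fun s : ℝ => L (exp (s • a))) 0 (Icc 0 t) → L (a ^ k) = 0 := by
  induction k with
  | zero => intro L h; simpa using h (left_mem_Icc.2 ht.le)
  | succ k ih =>
    intro L h
    have hderiv := eqOn_zero_of_hasDerivAt ht (L.hasDerivAt_map_exp_smul a) h
    simpa [pow_succ', ← mul_assoc] using ih (L.comp (ContinuousLinearMap.mul ℝ 𝔸 a)) hderiv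

theorem ContinuousLinearMap.eqOn_exp_smul_iff {t : ℝ} (ht : 0 < t) (L : 𝔸 →L[ℝ] E) (a : 𝔸) :
    EqOn (fun s : ℝ => L (exp (s • a))) 0 (Icc 0 t) ↔ ∀ k, L (a ^ k) = 0 :=
  ⟨fun h k => map_pow_eq_zero_of_eqOn_exp_smul ht a k L h, fun h s _ =>
    L.map_exp_eq_zero fun k => by simp [_root_.smul_pow, h]⟩

end Exponential

theorem intervalIntegral.integral_pos_iff_exists_ne_zero {r : ℝ → ℝ} {a b : ℝ} (hab : a < b)
    (hr : Continuous r) (hnn : ∀ s, 0 ≤ r s) :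
    0 < ∫ s in a..b, r s ↔ ∃ s ∈ Icc a b, r s ≠ 0 := by
  refine ⟨fun hpos => ?_, fun ⟨c, hc, hrc⟩ =>
    integral_pos hab hr.continuousOn (fun s _ => hnn s) ⟨c, hc, (hnn c).lt_of_ne' hrc⟩⟩
  by_contra! h
  have : ∫ s in a..b, r s = 0 := by
    rw [intervalIntegral.integral_congr (g := 0) (by rwa [uIcc_of_le hab.le])]
    simp
  exact hpos.ne' this

namespace Matrix

variable {ι κ : Type*}

theorem isHermitian_of_intervalIntegral {F : ℝ → Matrix ι ι ℂ} (hF : ∀ s, (F s).IsHermitian)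
    (a b : ℝ) : (of fun i j => ∫ s in a..b, F s i j).IsHermitian := by
  ext i j
  simp only [conjTranspose_apply, of_apply, Complex.star_def,
    ← intervalIntegral.intervalIntegral_conj]
  exact intervalIntegral.integral_congr fun s _ => by simpa using (hF s).apply i j

variable [Fintype ι]

theorem dotProduct_mulVec_of_intervalIntegral {F : ℝ → Matrix ι ι ℂ} {a b : ℝ}
    (hF : ∀ i j, IntervalIntegrable (fun s => F s i j) MeasureTheory.volume a b) (x y : ι → ℂ) :
    x ⬝ᵥ (of fun i j => ∫ s in a..b, F s i j) *ᵥ y = ∫ s in a..b, x ⬝ᵥ F s *ᵥ y := by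
  have hsum : ∀ M : Matrix ι ι ℂ, x ⬝ᵥ M *ᵥ y = ∑ i, ∑ j, x i * M i j * y j := fun M => by
    simp [dotProduct, mulVec, Finset.mul_sum, mul_assoc]
  have hint : ∀ i j, IntervalIntegrable (fun s => x i * F s i j * y j) MeasureTheory.volume a b :=
    fun i j => ((hF i j).const_mul _).mul_const _
  simp_rw [hsum, of_apply]
  rw [intervalIntegral.integral_finsetSum fun i _ => by
    simpa only [Finset.sum_fn] using IntervalIntegrable.sum Finset.univ fun j _ => hint i j]
  refine Finset.sum_congr rfl fun i _ => ?_
  rw [intervalIntegral.integral_finsetSum fun j _ => hint i j]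
  simp only [intervalIntegral.integral_mul_const, intervalIntegral.integral_const_mul]

variable [Fintype κ]

theorem rank_eq_card_iff {K : Type*} [Field K] (M : Matrix ι κ K) :
    M.rank = Fintype.card ι ↔ ∀ u, u ᵥ* M = 0 → u = 0 := by
  rw [rank_eq_finrank_span_row, eq_comm, ← Set.finrank,
    ← linearIndependent_iff_card_eq_finrank_span, ← vecMul_injective_iff, ← coe_vecMulLinear,
    injective_iff_map_eq_zero]
  rfl

theorem star_dotProduct_mul_conjTranspose_mulVec (G : Matrix ι κ ℂ) (x : ι → ℂ) :
    star x ⬝ᵥ (G * Gᴴ) *ᵥ x = ((∑ q, Complex.normSq ((star x ᵥ* G) q) : ℝ) : ℂ) := by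
  rw [← mulVec_mulVec, dotProduct_mulVec, mulVec_conjTranspose]
  simp [dotProduct, Complex.mul_conj]

theorem posDef_gramIntegral_iff {F : ℝ → Matrix ι κ ℂ} (hF : Continuous F) {a b : ℝ}
    (hab : a < b) :
    (of fun i j => ∫ s in a..b, (F s * (F s)ᴴ) i j).PosDef ↔
      ∀ u, (∀ s ∈ Icc a b, u ᵥ* F s = 0) → u = 0 := by
  set r : (ι → ℂ) → ℝ → ℝ := fun x s => ∑ q, Complex.normSq ((star x ᵥ* F s) q)
  have hr_cont : ∀ x, Continuous (r x) := by fun_prop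
  have hr_nonneg : ∀ x s, 0 ≤ r x s := fun x s =>
    Finset.sum_nonneg fun q _ => Complex.normSq_nonneg _
  have hr_eq_zero : ∀ x s, r x s = 0 ↔ star x ᵥ* F s = 0 := fun x s => by
    simp only [r, Finset.sum_eq_zero_iff_of_nonneg fun q _ => Complex.normSq_nonneg _]
    simp [funext_iff]
  have hquad : ∀ x, star x ⬝ᵥ (of fun i j => ∫ s in a..b, (F s * (F s)ᴴ) i j) *ᵥ x =
      ((∫ s in a..b, r x s : ℝ) : ℂ) := fun x => by
    rw [dotProduct_mulVec_of_intervalIntegral fun i j => by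
      exact Continuous.intervalIntegrable (by fun_prop) a b]
    simp_rw [star_dotProduct_mul_conjTranspose_mulVec, intervalIntegral.integral_ofReal]
    rfl
  rw [posDef_iff_dotProduct_mulVec, and_iff_right
    (isHermitian_of_intervalIntegral (fun s => isHermitian_mul_conjTranspose_self _) a b)]
  simp_rw [hquad, Complex.zero_lt_real,
    intervalIntegral.integral_pos_iff_exists_ne_zero hab (hr_cont _) (hr_nonneg _), ne_eq,
    hr_eq_zero]
  refine ⟨fun h u hu => ?_, fun h x hx => ?_⟩
  · by_contra hu0
    obtain ⟨s, hs, hne⟩ := h (star_ne_zero.2 hu0)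
    exact hne (by simpa using hu s hs)
  · by_contra! hx0
    exact hx (star_eq_zero.1 (h _ hx0))

end Matrix

section MatrixExponential

-- Matrices carry no norm instance; any algebra norm induces the product topology used by `exp`.
attribute [local instance] Matrix.linftyOpNormedRing Matrix.linftyOpNormedAlgebra

variable {ι E : Type*} [Fintype ι] [DecidableEq ι] [NormedAddCommGroup E] [NormedSpace ℂ E]

theorem Matrix.continuous_exp_smul (A : Matrix ι ι ℂ) : Continuous fun s : ℝ => exp (s • A) :=
  exp_continuous.comp (continuous_id.smul continuous_const)

theorem Matrix.eqOn_map_exp_smul_iff {t : ℝ} (ht : 0 < t) (L : Matrix ι ι ℂ →ₗ[ℂ] E)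
    (A : Matrix ι ι ℂ) :
    EqOn (fun s : ℝ => L (exp (s • A))) 0 (Icc 0 t) ↔ ∀ k < Fintype.card ι, L (A ^ k) = 0 := by
  rw [← map_pow_eq_zero_iff_of_lt]
  exact (L.restrictScalars ℝ).toContinuousLinearMap.eqOn_exp_smul_iff ht A

end MatrixExponential

theorem Matrix.vecMul_of_prod_eq_zero_iff {ι κ μ R : Type*} [Fintype ι] [CommSemiring R]
    (M : κ → Matrix ι μ R) (u : ι → R) :
    u ᵥ* (of fun i (kj : κ × μ) => M kj.1 i kj.2) = 0 ↔ ∀ k, u ᵥ* M k = 0 := by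
  simp [funext_iff, vecMul, dotProduct, Prod.forall]

theorem Matrix.posDef_outputGramian_iff {n : ℕ} {κ μ : Type*} [Fintype κ] [Fintype μ]
    (A : Matrix (Fin n) (Fin n) ℂ) (B : Matrix (Fin n) μ ℂ) (C : Matrix κ (Fin n) ℂ) {t : ℝ}
    (ht : 0 < t) :
    (of fun i j => ∫ s in (0:ℝ)..t, (C * exp (s • A) * B * Bᴴ * exp (s • Aᴴ) * Cᴴ) i j).PosDef ↔
      (of fun i (kj : Fin n × μ) => (C * A ^ (kj.1 : ℕ) * B) i kj.2).rank = Fintype.card κ := by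
  have hgram : ∀ s : ℝ, C * exp (s • A) * B * Bᴴ * exp (s • Aᴴ) * Cᴴ =
      (C * exp (s • A) * B) * (C * exp (s • A) * B)ᴴ := fun s => by
    simp only [conjTranspose_mul, ← exp_conjTranspose, conjTranspose_smul, star_trivial,
      Matrix.mul_assoc]
  simp_rw [hgram]
  rw [posDef_gramIntegral_iff
    ((continuous_const.matrix_mul A.continuous_exp_smul).matrix_mul continuous_const) ht,
    rank_eq_card_iff]
  refine forall_congr' fun u => imp_congr_left ?_
  let L : Matrix (Fin n) (Fin n) ℂ →ₗ[ℂ] (μ → ℂ) :=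
    { toFun := fun M => u ᵥ* (C * M * B)
      map_add' := fun M N => by simp [Matrix.mul_add, Matrix.add_mul, vecMul_add]
      map_smul' := fun c M => by simp [vecMul_smul] }
  have hkalman := eqOn_map_exp_smul_iff ht L A
  rw [Fintype.card_fin] at hkalman
  rw [vecMul_of_prod_eq_zero_iff (fun k : Fin n => C * A ^ (k : ℕ) * B), Fin.forall_iff]
  exact hkalman

theorem stmt12 {n m p : ℕ}
    (A : Matrix (Fin n) (Fin n) ℂ) (B : Matrix (Fin n) (Fin m) ℂ)
    (C : Matrix (Fin p) (Fin n) ℂ) :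
    (∃ t : ℝ, 0 < t ∧
      (Matrix.of fun (i j : Fin p) =>
        ∫ s in (0:ℝ)..t,
          (C * exp (s • A) * B * Bᴴ * exp (s • Aᴴ) * Cᴴ) i j).PosDef) ↔
    (Matrix.of fun (i : Fin p) (kj : Fin n × Fin m) =>
      (C * A ^ (kj.1 : ℕ) * B) i kj.2).rank = p := by
  refine ⟨fun ⟨t, ht, h⟩ => ?_, fun h => ⟨1, one_pos, ?_⟩⟩
  · simpa using (posDef_outputGramian_iff A B C ht).1 h
  · exact (posDef_outputGramian_iff A B C one_pos).2 (by simpa using h)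
end

section
/- Let A = diag(A_1, …, A_N) be block diagonal with A_i ∈ ℂ^{n_i×n_i}, and let z ∈ ℂ be an eigenvalue of A_j for exactly one index j. If for each i the block matrix (C_i(zI−A_i), C_iB_i) has rank p_i (where for i ≠ j this follows since zI−A_i is invertible and C_i has rank p_i), then the block matrix formed from the parallel connection, (C(zI−A), CB) with C = diag(C_1,…,C_N) and B the vertical stack of B_i, has rank p_1 + ⋯ + p_N. -/
/-! A vanishing combination `v` of the rows of the parallel connection splits into block
components `vᵢ`. The left columns force `vᵢ Cᵢ (zI - Aᵢ) = 0` for every `i`; for `i ≠ j` the factor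
`zI - Aᵢ` is invertible, so `vᵢ Cᵢ = 0` and hence `vᵢ Cᵢ Bᵢ = 0`. The right columns say that
`∑ᵢ vᵢ Cᵢ Bᵢ = 0`, so the remaining term `v_j C_j B_j` vanishes too. Thus every `vᵢ` is a vanishing
combination of the rows of `(Cᵢ(zI - Aᵢ), CᵢBᵢ)`, which has full row rank, and `v = 0`. -/

open Matrix

namespace Matrix

theorem linearIndependent_row_of_rank_eq_card {K m n : Type*} [Field K] [Fintype m]
    [Fintype n] {M : Matrix m n K} (h : M.rank = Fintype.card m) : LinearIndependent K M.row :=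
  linearIndependent_iff_card_eq_finrank_span.mpr (h ▸ M.rank_eq_finrank_span_row)

theorem vecMul_eq_zero_of_vecMul_mul_eq_zero {R m n : Type*} [CommRing R] [Fintype m]
    [Fintype n] [DecidableEq n] {C : Matrix m n R} {T : Matrix n n R} (hT : IsUnit T)
    {v : m → R} (hv : v ᵥ* (C * T) = 0) : v ᵥ* C = 0 :=
  vecMul_injective_of_isUnit hT (by simpa [vecMul_vecMul] using hv)

section BlockMatrices

variable {R ι : Type*} [Fintype ι] {l : Type*} {m n : ι → Type*}

theorem vecMul_blockDiagonal'_apply [DecidableEq ι] [∀ i, Fintype (m i)]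
    [NonUnitalNonAssocSemiring R]
    (M : ∀ i, Matrix (m i) (n i) R) (v : (Σ i, m i) → R) (i : ι) (c : n i) :
    (v ᵥ* blockDiagonal' M) ⟨i, c⟩ = ((fun r => v ⟨i, r⟩) ᵥ* M i) c := by
  simp only [vecMul, dotProduct, ← Finset.univ_sigma_univ, Finset.sum_sigma]
  rw [Fintype.sum_eq_single i fun k hk => by simp [blockDiagonal'_apply_ne _ _ _ hk]]
  simp

theorem vecMul_of_sigma [∀ i, Fintype (m i)] [NonUnitalNonAssocSemiring R]
    (B : ∀ i, Matrix (m i) l R) (v : (Σ i, m i) → R) :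
    v ᵥ* of (fun (x : Σ i, m i) c => B x.1 x.2 c) = ∑ i, (fun r => v ⟨i, r⟩) ᵥ* B i := by
  ext c
  simp only [vecMul, dotProduct, ← Finset.univ_sigma_univ, Finset.sum_sigma, Finset.sum_apply,
    of_apply]

theorem blockDiagonal'_mul_of_sigma [DecidableEq ι] [∀ i, Fintype (n i)]
    [NonUnitalNonAssocSemiring R]
    (C : ∀ i, Matrix (m i) (n i) R) (B : ∀ i, Matrix (n i) l R) :
    blockDiagonal' C * of (fun (x : Σ i, n i) c => B x.1 x.2 c) =
      of fun (x : Σ i, m i) c => (C x.1 * B x.1) x.2 c := by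
  ext ⟨i, r⟩ c
  simp only [mul_apply, ← Finset.univ_sigma_univ, Finset.sum_sigma, of_apply]
  rw [Fintype.sum_eq_single i fun k hk => by simp [blockDiagonal'_apply_ne _ _ _ hk.symm]]
  simp

theorem blockDiagonal'_mul_smul_one_sub [DecidableEq ι] [∀ i, Fintype (n i)]
    [∀ i, DecidableEq (n i)] [CommRing R]
    (C : ∀ i, Matrix (m i) (n i) R) (A : ∀ i, Matrix (n i) (n i) R) (z : R) :
    blockDiagonal' C * (z • (1 : Matrix (Σ i, n i) (Σ i, n i) R) - blockDiagonal' A) =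
      blockDiagonal' fun i => C i * (z • (1 : Matrix (n i) (n i) R) - A i) := by
  rw [← blockDiagonal'_one, ← blockDiagonal'_smul, ← blockDiagonal'_sub, ← blockDiagonal'_mul]
  rfl

theorem linearIndependent_row_fromCols_blockDiagonal' [DecidableEq ι] [∀ i, Fintype (m i)]
    {K : Type*} [Field K] [Fintype l]
    (X : ∀ i, Matrix (m i) (n i) K) (Y : ∀ i, Matrix (m i) l K) (j : ι)
    (hker : ∀ i, i ≠ j → ∀ v, v ᵥ* X i = 0 → v ᵥ* Y i = 0)
    (hrow : ∀ i, LinearIndependent K (fromCols (X i) (Y i)).row) :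
    LinearIndependent K
      (fromCols (blockDiagonal' X) (of fun (x : Σ i, m i) c => Y x.1 x.2 c)).row := by
  simp only [← vecMul_injective_iff, ← coe_vecMulLinear, injective_iff_map_eq_zero] at hrow ⊢
  intro v hv
  rw [vecMulLinear_apply, vecMul_fromCols] at hv
  have hX : ∀ i, (fun r => v ⟨i, r⟩) ᵥ* X i = 0 := fun i => funext fun c => by
    simpa [vecMul_blockDiagonal'_apply] using congrFun hv (.inl ⟨i, c⟩)
  have hsum : ∑ i, (fun r => v ⟨i, r⟩) ᵥ* Y i = 0 := by
    rw [← vecMul_of_sigma]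
    exact funext fun c => congrFun hv (.inr c)
  have hY : ∀ i, (fun r => v ⟨i, r⟩) ᵥ* Y i = 0 := by
    have hne : ∀ i, i ≠ j → (fun r => v ⟨i, r⟩) ᵥ* Y i = 0 := fun i hi => hker i hi _ (hX i)
    intro i
    rcases eq_or_ne i j with rfl | hi
    · rwa [Fintype.sum_eq_single i hne] at hsum
    · exact hne i hi
  funext ⟨i, r⟩
  refine congrFun (hrow i (fun r => v ⟨i, r⟩) ?_) r
  rw [vecMulLinear_apply, vecMul_fromCols, hX i, hY i, Sum.elim_zero_zero]

end BlockMatrices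

end Matrix

theorem stmt19_general {N m : ℕ} (n p : Fin N → ℕ)
    (A : ∀ i, Matrix (Fin (n i)) (Fin (n i)) ℂ)
    (B : ∀ i, Matrix (Fin (n i)) (Fin m) ℂ)
    (C : ∀ i, Matrix (Fin (p i)) (Fin (n i)) ℂ)
    (z : ℂ) (j : Fin N)
    (hone : ∀ i, i ≠ j → z ∉ spectrum ℂ (A i))
    (hH : ∀ i,
      (Matrix.fromCols ((C i) * (z • (1 : Matrix (Fin (n i)) (Fin (n i)) ℂ) - A i))
        ((C i) * (B i))).rank = p i) :
    (Matrix.fromCols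
      ((Matrix.blockDiagonal' C) *
        (z • (1 : Matrix ((i : Fin N) × Fin (n i)) ((i : Fin N) × Fin (n i)) ℂ) -
          Matrix.blockDiagonal' A))
      ((Matrix.blockDiagonal' C) *
        (Matrix.of fun (x : (i : Fin N) × Fin (n i)) (jc : Fin m) => B x.1 x.2 jc))).rank
    = ∑ i, p i := by
  have hker : ∀ i, i ≠ j → ∀ v, v ᵥ* (C i * (z • 1 - A i)) = 0 → v ᵥ* (C i * B i) = 0 := by
    intro i hi v hv
    have hunit : IsUnit (z • 1 - A i) := by
      simpa [Algebra.algebraMap_eq_smul_one] using spectrum.notMem_iff.mp (hone i hi)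
    rw [← vecMul_vecMul, vecMul_eq_zero_of_vecMul_mul_eq_zero hunit hv, zero_vecMul]
  rw [blockDiagonal'_mul_smul_one_sub, blockDiagonal'_mul_of_sigma,
    (linearIndependent_row_fromCols_blockDiagonal' _ (fun i => C i * B i) j hker fun i =>
      linearIndependent_row_of_rank_eq_card (by simpa using hH i)).rank_matrix]
  simp [Fintype.card_sigma]

theorem stmt19 {N m : ℕ} (n p : Fin N → ℕ)
    (A : ∀ i, Matrix (Fin (n i)) (Fin (n i)) ℂ)
    (B : ∀ i, Matrix (Fin (n i)) (Fin m) ℂ)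
    (C : ∀ i, Matrix (Fin (p i)) (Fin (n i)) ℂ)
    (z : ℂ) (j : Fin N) (hj : z ∈ spectrum ℂ (A j))
    (hone : ∀ i, i ≠ j → z ∉ spectrum ℂ (A i))
    (hH : ∀ i,
      (Matrix.fromCols ((C i) * (z • (1 : Matrix (Fin (n i)) (Fin (n i)) ℂ) - A i))
        ((C i) * (B i))).rank = p i) :
    (Matrix.fromCols
      ((Matrix.blockDiagonal' C) *
        (z • (1 : Matrix ((i : Fin N) × Fin (n i)) ((i : Fin N) × Fin (n i)) ℂ) -
          Matrix.blockDiagonal' A))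
      ((Matrix.blockDiagonal' C) *
        (Matrix.of fun (x : (i : Fin N) × Fin (n i)) (jc : Fin m) => B x.1 x.2 jc))).rank
    = ∑ i, p i :=
  stmt19_general n p A B C z j hone hH
end
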